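/- Under the Chern-Ricci flow, the time derivative of the lowered Chern curvature tensor satisfies ∂_t R_{ij̄kl̄} = −R_{ql̄p}^p R_{ij̄k}^q + ∇_{j̄} ∇_i R_{kl̄p}^p (in local coordinates, with R_{kl̄p}^p = g^{q̄p} R_{kl̄pq̄} the trace over the last two indices). -/

import Mathlib

open Complex Matrix
open scoped ComplexOrder

noncomputable def pd {n : ℕ} (i : Fin n) (f : (Fin n → ℂ) → ℂ) (z : Fin n → ℂ) : ℂ :=
  (fderiv ℝ f z (Pi.single i 1) - Complex.I * fderiv ℝ f z (Pi.single i Complex.I)) / 2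

noncomputable def pdbar {n : ℕ} (i : Fin n) (f : (Fin n → ℂ) → ℂ) (z : Fin n → ℂ) : ℂ :=
  (fderiv ℝ f z (Pi.single i 1) + Complex.I * fderiv ℝ f z (Pi.single i Complex.I)) / 2


/-- Chern connection Christoffel symbols `Γ_{ik}^l = ∑_s g^{s̄l} ∂_i g_{ks̄}`,
where `(g z)⁻¹ s l` denotes `g^{s̄ l}`. -/
noncomputable def Gam {n : ℕ} (g : (Fin n → ℂ) → Matrix (Fin n) (Fin n) ℂ)
    (i k l : Fin n) (z : Fin n → ℂ) : ℂ :=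
  ∑ s, (g z)⁻¹ s l * pd i (fun w => g w k s) z

/-- Chern-Ricci curvature `R^C_{ij̄} = −∂_i ∂_{j̄} log det g`. -/
noncomputable def RC {n : ℕ} (g : (Fin n → ℂ) → Matrix (Fin n) (Fin n) ℂ)
    (i j : Fin n) (z : Fin n → ℂ) : ℂ :=
  - pd i (fun w => pdbar j (fun w' => Complex.log ((g w').det)) w) z

/-- Chern curvature `R_{ij̄k}^l = −∂_{j̄} Γ_{ik}^l`. -/
noncomputable def Rup {n : ℕ} (g : (Fin n → ℂ) → Matrix (Fin n) (Fin n) ℂ)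
    (i j k l : Fin n) (z : Fin n → ℂ) : ℂ :=
  - pdbar j (Gam g i k l) z

/-- Lowered Chern curvature `R_{ij̄kl̄} = g_{rl̄} R_{ij̄k}^r`. -/
noncomputable def RlowG {n : ℕ} (g : (Fin n → ℂ) → Matrix (Fin n) (Fin n) ℂ)
    (i j k l : Fin n) (z : Fin n → ℂ) : ℂ :=
  ∑ r, g z r l * Rup g i j k r z

/-- Trace `R_{kl̄p}^p`. -/
noncomputable def trR {n : ℕ} (g : (Fin n → ℂ) → Matrix (Fin n) (Fin n) ℂ)
    (k l : Fin n) (z : Fin n → ℂ) : ℂ :=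
  ∑ p, Rup g k l p p z

/-- `∇_i` of the tensor `S_{kl̄} = R_{kl̄p}^p`. -/
noncomputable def covI {n : ℕ} (g : (Fin n → ℂ) → Matrix (Fin n) (Fin n) ℂ)
    (i k l : Fin n) (z : Fin n → ℂ) : ℂ :=
  pd i (trR g k l) z - ∑ r, Gam g i k r z * trR g r l z

namespace CRF
open scoped ContDiff
section rules
variable {E : Type*} [NormedAddCommGroup E] [NormedSpace ℝ E] {f g : E → ℂ} {x v : E}

lemma dv_add (hf : DifferentiableAt ℝ f x) (hg : DifferentiableAt ℝ g x) :
    fderiv ℝ (fun y => f y + g y) x v = fderiv ℝ f x v + fderiv ℝ g x v := by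
  rw [fderiv_fun_add hf hg]; rfl

lemma dv_mul (hf : DifferentiableAt ℝ f x) (hg : DifferentiableAt ℝ g x) :
    fderiv ℝ (fun y => f y * g y) x v = fderiv ℝ f x v * g x + f x * fderiv ℝ g x v := by
  rw [fderiv_fun_mul hf hg]; simp [smul_eq_mul]; ring

lemma dv_const (c : ℂ) : fderiv ℝ (fun _ : E => c) x v = 0 := by
  rw [fderiv_fun_const]; rfl

lemma dv_neg (hf : DifferentiableAt ℝ f x) :
    fderiv ℝ (fun y => -f y) x v = - fderiv ℝ f x v := by
  rw [fderiv_fun_neg]; rfl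

lemma dv_sub (hf : DifferentiableAt ℝ f x) (hg : DifferentiableAt ℝ g x) :
    fderiv ℝ (fun y => f y - g y) x v = fderiv ℝ f x v - fderiv ℝ g x v := by
  rw [fderiv_fun_sub hf hg]; rfl

lemma dv_const_mul (hf : DifferentiableAt ℝ f x) (c : ℂ) :
    fderiv ℝ (fun y => c * f y) x v = c * fderiv ℝ f x v := by
  rw [fderiv_const_mul hf]; simp

lemma dv_sum {ι : Type*} (s : Finset ι) (F : ι → E → ℂ)
    (hf : ∀ a ∈ s, DifferentiableAt ℝ (F a) x) :
    fderiv ℝ (fun y => ∑ a ∈ s, F a y) x v = ∑ a ∈ s, fderiv ℝ (F a) x v := by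
  rw [fderiv_fun_sum hf]; simp

lemma dv_prod {ι : Type*} [DecidableEq ι] (s : Finset ι) (F : ι → E → ℂ)
    (hf : ∀ a ∈ s, DifferentiableAt ℝ (F a) x) :
    fderiv ℝ (fun y => ∏ a ∈ s, F a y) x v
      = ∑ a ∈ s, fderiv ℝ (F a) x v * ∏ b ∈ s.erase a, F b x := by
  rw [fderiv_finset_prod hf]; simp [smul_eq_mul]; ring_nf
  exact Finset.sum_congr rfl fun a _ => by ring

lemma dv_conj (hf : DifferentiableAt ℝ f x) :
    fderiv ℝ (fun y => (starRingEnd ℂ) (f y)) x v = (starRingEnd ℂ) (fderiv ℝ f x v) := by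
  have h := ((Complex.conjCLE.toContinuousLinearMap).hasFDerivAt (x := f x)).comp x hf.hasFDerivAt
  rw [show (fun y => (starRingEnd ℂ) (f y)) = (⇑Complex.conjCLE.toContinuousLinearMap ∘ f) from rfl, h.fderiv]
  rfl

lemma dv_log (hx : f x ∈ Complex.slitPlane) (hf : DifferentiableAt ℝ f x) :
    fderiv ℝ (fun y => Complex.log (f y)) x v = (f x)⁻¹ * fderiv ℝ f x v := by
  have h := ((Complex.hasDerivAt_log hx).hasFDerivAt.restrictScalars ℝ).comp x hf.hasFDerivAt
  rw [show (fun y => Complex.log (f y)) = (Complex.log ∘ f) from rfl, h.fderiv]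
  simp [smul_eq_mul, mul_comm]

lemma dv_inv (hf : DifferentiableAt ℝ f x) (h0 : f x ≠ 0) :
    fderiv ℝ (fun y => (f y)⁻¹) x v = - ((f x)⁻¹ * (f x)⁻¹ * fderiv ℝ f x v) := by
  have h := ((hasDerivAt_inv h0).hasFDerivAt.restrictScalars ℝ).comp x hf.hasFDerivAt
  rw [show (fun y => (f y)⁻¹) = ((fun y => y⁻¹) ∘ f) from rfl, h.fderiv]
  simp [smul_eq_mul]
  ring

end rules

variable {n : ℕ}

abbrev Qs (n : ℕ) := ℝ × (Fin n → ℂ)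

noncomputable def pdP (i : Fin n) (F : Qs n → ℂ) (q : Qs n) : ℂ :=
  (fderiv ℝ F q (0, Pi.single i 1) - Complex.I * fderiv ℝ F q (0, Pi.single i Complex.I)) / 2

noncomputable def pdbarP (i : Fin n) (F : Qs n → ℂ) (q : Qs n) : ℂ :=
  (fderiv ℝ F q (0, Pi.single i 1) + Complex.I * fderiv ℝ F q (0, Pi.single i Complex.I)) / 2

noncomputable def dtP (F : Qs n → ℂ) (q : Qs n) : ℂ := fderiv ℝ F q (1, 0)

/-- Smooth on `W`. -/
def SmOn (W : Set (Qs n)) (F : Qs n → ℂ) : Prop := ContDiffOn ℝ ∞ F W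

variable {W : Set (Qs n)} {F G : Qs n → ℂ} {q : Qs n}

lemma SmOn.contDiffAt (hF : SmOn W F) (hW : IsOpen W) (hq : q ∈ W) :
    ContDiffAt ℝ ∞ F q := ContDiffOn.contDiffAt hF (hW.mem_nhds hq)

lemma SmOn.diffAt (hF : SmOn W F) (hW : IsOpen W) (hq : q ∈ W) :
    DifferentiableAt ℝ F q := (hF.contDiffAt hW hq).differentiableAt (by simp)

lemma SmOn.add (hF : SmOn W F) (hG : SmOn W G) : SmOn W (fun q => F q + G q) := ContDiffOn.add hF hG
lemma SmOn.mul (hF : SmOn W F) (hG : SmOn W G) : SmOn W (fun q => F q * G q) := ContDiffOn.mul hF hG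
lemma SmOn.neg (hF : SmOn W F) : SmOn W (fun q => - F q) := ContDiffOn.neg hF
lemma SmOn.sub (hF : SmOn W F) (hG : SmOn W G) : SmOn W (fun q => F q - G q) := ContDiffOn.sub hF hG
lemma smOn_const {c : ℂ} : SmOn W (fun _ => c) := contDiffOn_const

lemma SmOn.sum {ι : Type*} {s : Finset ι} {F : ι → Qs n → ℂ}
    (hF : ∀ a ∈ s, SmOn W (F a)) : SmOn W (fun q => ∑ a ∈ s, F a q) :=
  ContDiffOn.sum hF

lemma SmOn.prod {ι : Type*} {s : Finset ι} {F : ι → Qs n → ℂ}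
    (hF : ∀ a ∈ s, SmOn W (F a)) : SmOn W (fun q => ∏ a ∈ s, F a q) := by
  classical
  induction s using Finset.induction with
  | empty => simpa using (smOn_const (c := 1))
  | insert a s ha ih =>
    simp only [Finset.prod_insert ha]
    exact ContDiffOn.mul (hF a (Finset.mem_insert_self a s))
      (ih fun b hb => hF b (Finset.mem_insert_of_mem hb))

lemma SmOn.conj (hF : SmOn W F) : SmOn W (fun q => (starRingEnd ℂ) (F q)) :=
  fun x hx => (Complex.conjCLE.toContinuousLinearMap.contDiff.contDiffAt.comp_contDiffWithinAt x (hF x hx))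

lemma SmOn.inv (hF : SmOn W F) (h0 : ∀ q ∈ W, F q ≠ 0) : SmOn W (fun q => (F q)⁻¹) :=
  ContDiffOn.inv hF h0

lemma SmOn.fderiv_apply (hF : SmOn W F) (hW : IsOpen W) (v : Qs n) :
    SmOn W (fun q => fderiv ℝ F q v) := by
  have h1 : ContDiffOn ℝ ∞ (fderiv ℝ F) W := by
    apply hF.fderiv_of_isOpen hW
    exact le_of_eq (by simp)
  exact (ContinuousLinearMap.apply ℝ ℂ v).contDiff.comp_contDiffOn h1

lemma SmOn.pdP (hF : SmOn W F) (hW : IsOpen W) (i : Fin n) : SmOn W (CRF.pdP i F) := by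
  have h1 := hF.fderiv_apply hW (0, Pi.single i 1)
  have h2 := hF.fderiv_apply hW (0, Pi.single i Complex.I)
  have : CRF.pdP i F = fun q =>
      (fderiv ℝ F q (0, Pi.single i 1) - Complex.I * fderiv ℝ F q (0, Pi.single i Complex.I)) / 2 := rfl
  rw [this]
  exact ContDiffOn.congr (ContDiffOn.mul (ContDiffOn.sub h1 (ContDiffOn.mul (smOn_const (c := Complex.I)) h2)) (smOn_const (c := (2:ℂ)⁻¹))) (fun q _ => by ring)

lemma SmOn.pdbarP (hF : SmOn W F) (hW : IsOpen W) (i : Fin n) : SmOn W (CRF.pdbarP i F) := by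
  have h1 := hF.fderiv_apply hW (0, Pi.single i 1)
  have h2 := hF.fderiv_apply hW (0, Pi.single i Complex.I)
  have : CRF.pdbarP i F = fun q =>
      (fderiv ℝ F q (0, Pi.single i 1) + Complex.I * fderiv ℝ F q (0, Pi.single i Complex.I)) / 2 := rfl
  rw [this]
  exact ContDiffOn.congr (ContDiffOn.mul (ContDiffOn.add h1 (ContDiffOn.mul (smOn_const (c := Complex.I)) h2)) (smOn_const (c := (2:ℂ)⁻¹))) (fun q _ => by ring)

lemma SmOn.dtP (hF : SmOn W F) (hW : IsOpen W) : SmOn W (CRF.dtP F) :=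
  hF.fderiv_apply hW (1, 0)


section slices
variable {F G : Qs n → ℂ} {t : ℝ} {z : Fin n → ℂ} {q : Qs n}

lemma sliceZ_fderiv (hF : DifferentiableAt ℝ F (t, z)) (v : Fin n → ℂ) :
    fderiv ℝ (fun w => F (t, w)) z v = fderiv ℝ F (t, z) (0, v) := by
  have he : HasFDerivAt (fun w : Fin n → ℂ => ((t, w) : Qs n))
      ((0 : (Fin n → ℂ) →L[ℝ] ℝ).prod (ContinuousLinearMap.id ℝ _)) z :=
    HasFDerivAt.prodMk (hasFDerivAt_const t z) (hasFDerivAt_id z)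
  have h := hF.hasFDerivAt.comp z he
  rw [show (fun w => F (t, w)) = (F ∘ fun w : Fin n → ℂ => ((t, w) : Qs n)) from rfl, h.fderiv]
  rfl

lemma pd_slice (i : Fin n) (hF : DifferentiableAt ℝ F (t, z)) :
    pd i (fun w => F (t, w)) z = pdP i F (t, z) := by
  unfold pd pdP; rw [sliceZ_fderiv hF, sliceZ_fderiv hF]

lemma pdbar_slice (i : Fin n) (hF : DifferentiableAt ℝ F (t, z)) :
    pdbar i (fun w => F (t, w)) z = pdbarP i F (t, z) := by
  unfold pdbar pdbarP; rw [sliceZ_fderiv hF, sliceZ_fderiv hF]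

lemma deriv_slice (hF : DifferentiableAt ℝ F (t, z)) :
    deriv (fun τ => F (τ, z)) t = dtP F (t, z) := by
  have he : HasDerivAt (fun τ : ℝ => ((τ, z) : Qs n)) ((1 : ℝ), (0 : Fin n → ℂ)) t :=
    HasDerivAt.prodMk (hasDerivAt_id t) (hasDerivAt_const t z)
  have h := hF.hasFDerivAt.comp_hasDerivAt t he
  rw [show (fun τ => F (τ, z)) = (F ∘ fun τ : ℝ => ((τ, z) : Qs n)) from rfl, h.deriv]
  rfl

lemma pd_congr {f g : (Fin n → ℂ) → ℂ} {z : Fin n → ℂ} (i : Fin n) (h : f =ᶠ[nhds z] g) :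
    pd i f z = pd i g z := by
  unfold pd; rw [h.fderiv_eq]

lemma pdbar_congr {f g : (Fin n → ℂ) → ℂ} {z : Fin n → ℂ} (i : Fin n) (h : f =ᶠ[nhds z] g) :
    pdbar i f z = pdbar i g z := by
  unfold pdbar; rw [h.fderiv_eq]

lemma diff_fderiv_apply (hF : ContDiffAt ℝ ∞ F q) (v : Qs n) :
    DifferentiableAt ℝ (fun y => fderiv ℝ F y v) q := by
  have h : ContDiffAt ℝ ∞ (fderiv ℝ F) q := hF.fderiv_right (m := ∞) (le_of_eq (by simp))
  exact ((ContinuousLinearMap.apply ℝ ℂ v).contDiff.contDiffAt.comp q h).differentiableAt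
    (by simp)

lemma fderiv_fderiv_comm (hF : ContDiffAt ℝ ∞ F q) (v w : Qs n) :
    fderiv ℝ (fun y => fderiv ℝ F y w) q v = fderiv ℝ (fun y => fderiv ℝ F y v) q w := by
  have hd : DifferentiableAt ℝ (fderiv ℝ F) q :=
    (hF.fderiv_right (m := ∞) (le_of_eq (by simp))).differentiableAt (by simp)
  have h1 : ∀ u : Qs n, fderiv ℝ (fun y => fderiv ℝ F y u) q = (fderiv ℝ (fderiv ℝ F) q).flip u := by
    intro u
    rw [fderiv_clm_apply hd (differentiableAt_const u)]
    simp
  have hsym := hF.isSymmSndFDerivAt (by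
    rw [show ((2:WithTop ℕ∞)) = ((2:ℕ∞) : WithTop ℕ∞) from rfl]; rw [minSmoothness_of_isRCLikeNormedField]; exact_mod_cast le_top)
  rw [h1 v, h1 w]
  exact hsym.eq v w

lemma lop_fderiv (hF : ContDiffAt ℝ ∞ F q) (a b : ℂ) (v1 v2 u : Qs n) :
    fderiv ℝ (fun y => a * fderiv ℝ F y v1 + b * fderiv ℝ F y v2) q u
      = a * fderiv ℝ (fun y => fderiv ℝ F y v1) q u + b * fderiv ℝ (fun y => fderiv ℝ F y v2) q u := by
  rw [dv_add ((diff_fderiv_apply hF v1).const_mul a) ((diff_fderiv_apply hF v2).const_mul b),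
      dv_const_mul (diff_fderiv_apply hF v1) a, dv_const_mul (diff_fderiv_apply hF v2) b]

lemma dtP_pdP_comm (i : Fin n) (hF : ContDiffAt ℝ ∞ F q) :
    dtP (pdP i F) q = pdP i (dtP F) q := by
  have e1 : pdP i F = fun y => (2⁻¹ : ℂ) * fderiv ℝ F y (0, Pi.single i 1)
      + (-(Complex.I/2)) * fderiv ℝ F y (0, Pi.single i Complex.I) := by
    funext y; unfold pdP; ring
  have e2 : dtP F = fun y => fderiv ℝ F y ((1:ℝ), (0 : Fin n → ℂ)) := rfl
  have hL : dtP (pdP i F) q = fderiv ℝ (pdP i F) q ((1:ℝ), (0 : Fin n → ℂ)) := rfl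
  rw [hL, e1, lop_fderiv hF,
    fderiv_fderiv_comm hF ((1:ℝ), (0 : Fin n → ℂ)) (0, Pi.single i 1),
    fderiv_fderiv_comm hF ((1:ℝ), (0 : Fin n → ℂ)) (0, Pi.single i Complex.I)]
  unfold pdP dtP
  ring

lemma dtP_pdbarP_comm (i : Fin n) (hF : ContDiffAt ℝ ∞ F q) :
    dtP (pdbarP i F) q = pdbarP i (dtP F) q := by
  have e1 : pdbarP i F = fun y => (2⁻¹ : ℂ) * fderiv ℝ F y (0, Pi.single i 1)
      + (Complex.I/2) * fderiv ℝ F y (0, Pi.single i Complex.I) := by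
    funext y; unfold pdbarP; ring
  have e2 : dtP F = fun y => fderiv ℝ F y ((1:ℝ), (0 : Fin n → ℂ)) := rfl
  have hL : dtP (pdbarP i F) q = fderiv ℝ (pdbarP i F) q ((1:ℝ), (0 : Fin n → ℂ)) := rfl
  rw [hL, e1, lop_fderiv hF,
    fderiv_fderiv_comm hF ((1:ℝ), (0 : Fin n → ℂ)) (0, Pi.single i 1),
    fderiv_fderiv_comm hF ((1:ℝ), (0 : Fin n → ℂ)) (0, Pi.single i Complex.I)]
  unfold pdbarP dtP
  ring

lemma pdbarP_pdP_comm (j k : Fin n) (hF : ContDiffAt ℝ ∞ F q) :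
    pdbarP j (pdP k F) q = pdP k (pdbarP j F) q := by
  have e1 : pdP k F = fun y => (2⁻¹ : ℂ) * fderiv ℝ F y (0, Pi.single k 1)
      + (-(Complex.I/2)) * fderiv ℝ F y (0, Pi.single k Complex.I) := by
    funext y; unfold pdP; ring
  have e2 : pdbarP j F = fun y => (2⁻¹ : ℂ) * fderiv ℝ F y (0, Pi.single j 1)
      + (Complex.I/2) * fderiv ℝ F y (0, Pi.single j Complex.I) := by
    funext y; unfold pdbarP; ring
  have hL : pdbarP j (pdP k F) q = (fderiv ℝ (pdP k F) q (0, Pi.single j 1)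
      + Complex.I * fderiv ℝ (pdP k F) q (0, Pi.single j Complex.I)) / 2 := rfl
  have hR : pdP k (pdbarP j F) q = (fderiv ℝ (pdbarP j F) q (0, Pi.single k 1)
      - Complex.I * fderiv ℝ (pdbarP j F) q (0, Pi.single k Complex.I)) / 2 := rfl
  rw [hL, hR, e1, e2, lop_fderiv hF, lop_fderiv hF, lop_fderiv hF, lop_fderiv hF,
      fderiv_fderiv_comm hF (0, Pi.single j 1) (0, Pi.single k 1),
      fderiv_fderiv_comm hF (0, Pi.single j 1) (0, Pi.single k Complex.I),
      fderiv_fderiv_comm hF (0, Pi.single j Complex.I) (0, Pi.single k 1),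
      fderiv_fderiv_comm hF (0, Pi.single j Complex.I) (0, Pi.single k Complex.I)]
  ring

end slices

section joint
variable (g : ℝ → (Fin n → ℂ) → Matrix (Fin n) (Fin n) ℂ)

def Gks (k s : Fin n) : Qs n → ℂ := fun q => g q.1 q.2 k s
noncomputable def detJ : Qs n → ℂ := fun q => (g q.1 q.2).det
noncomputable def adjJ (a b : Fin n) : Qs n → ℂ := fun q => (g q.1 q.2).adjugate a b
noncomputable def InvJ (a b : Fin n) : Qs n → ℂ := fun q => (g q.1 q.2)⁻¹ a b
noncomputable def lgdJ : Qs n → ℂ := fun q => Complex.log (detJ g q)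
noncomputable def GamJ (i k l : Fin n) : Qs n → ℂ :=
  fun q => ∑ s, InvJ g s l q * pdP i (Gks g k s) q
noncomputable def RupJ (i j k l : Fin n) : Qs n → ℂ := fun q => - pdbarP j (GamJ g i k l) q
noncomputable def trRJ (k l : Fin n) : Qs n → ℂ := fun q => ∑ p, RupJ g k l p p q
noncomputable def covIJ (i k l : Fin n) : Qs n → ℂ :=
  fun q => pdP i (trRJ g k l) q - ∑ r, GamJ g i k r q * trRJ g r l q
noncomputable def RlowJ (i j k l : Fin n) : Qs n → ℂ :=
  fun q => ∑ r, Gks g r l q * RupJ g i j k r q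
noncomputable def DGamF (i k l : Fin n) : Qs n → ℂ :=
  fun q => (∑ a, ∑ b, GamJ g i k a q * trRJ g a b q * InvJ g b l q)
    - ∑ s, InvJ g s l q * pdP i (trRJ g k s) q

variable {g} {W : Set (Qs n)}

section smooth

lemma detJ_eq : detJ g = fun q =>
    ∑ σ : Equiv.Perm (Fin n), ((Equiv.Perm.sign σ : ℤ) : ℂ) * ∏ p, Gks g (σ p) p q := by
  funext q
  simp [detJ, Matrix.det_apply, Units.smul_def, zsmul_eq_mul, Gks]

lemma smDet (hg : ∀ k s : Fin n, SmOn W (Gks g k s)) : SmOn W (detJ g) := by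
  rw [detJ_eq (g := g)]
  exact SmOn.sum fun σ _ => ((SmOn.prod fun p _ => hg (σ p) p).mul
    (smOn_const (c := ((Equiv.Perm.sign σ : ℤ) : ℂ)))).congr fun q _ => by ring

lemma smAdj (hg : ∀ k s : Fin n, SmOn W (Gks g k s)) (a b : Fin n) : SmOn W (adjJ g a b) := by
  have he : adjJ g a b = fun q => ∑ σ : Equiv.Perm (Fin n), ((Equiv.Perm.sign σ : ℤ) : ℂ) *
      ∏ p, ((g q.1 q.2).updateRow b (Pi.single a 1)) (σ p) p := by
    funext q
    simp [adjJ, Matrix.adjugate_apply, Matrix.det_apply, Units.smul_def, zsmul_eq_mul]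
  rw [he]
  refine SmOn.sum fun σ _ => ?_
  refine ((SmOn.prod fun p _ => ?_).mul (smOn_const (c := ((Equiv.Perm.sign σ : ℤ) : ℂ)))).congr
    fun q _ => by ring
  by_cases h : σ p = b
  · have : (fun q : Qs n => ((g q.1 q.2).updateRow b (Pi.single a 1)) (σ p) p)
        = fun _ : Qs n => (Pi.single a (1:ℂ) : Fin n → ℂ) p := by
      funext q; rw [h, Matrix.updateRow_self]
    rw [this]; exact smOn_const
  · have : (fun q : Qs n => ((g q.1 q.2).updateRow b (Pi.single a 1)) (σ p) p)
        = Gks g (σ p) p := by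
      funext q; rw [Matrix.updateRow_ne h]; rfl
    rw [this]; exact hg (σ p) p

lemma InvJ_eq (a b : Fin n) : InvJ g a b = fun q => (detJ g q)⁻¹ * adjJ g a b q := by
  funext q
  simp [InvJ, Matrix.inv_def, Ring.inverse_eq_inv', detJ, adjJ, Matrix.smul_apply, smul_eq_mul]

variable (hW : IsOpen W) (hg : ∀ k s : Fin n, SmOn W (Gks g k s))
  (hd : ∀ q ∈ W, detJ g q ≠ 0)
include hW hg hd

omit hW in
lemma smInv (a b : Fin n) : SmOn W (InvJ g a b) := by
  rw [InvJ_eq (g := g)]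
  exact ((smDet hg).inv hd).mul (smAdj hg a b)

lemma smGam (i k l : Fin n) : SmOn W (GamJ g i k l) :=
  SmOn.sum fun s _ => (smInv hg hd s l).mul ((hg k s).pdP hW i)

lemma smRup (i j k l : Fin n) : SmOn W (RupJ g i j k l) :=
  ((smGam hW hg hd i k l).pdbarP hW j).neg

lemma smTrR (k l : Fin n) : SmOn W (trRJ g k l) :=
  SmOn.sum fun p _ => smRup hW hg hd k l p p

lemma smCovI (i k l : Fin n) : SmOn W (covIJ g i k l) :=
  ((smTrR hW hg hd k l).pdP hW i).sub
    (SmOn.sum fun r _ => (smGam hW hg hd i k r).mul (smTrR hW hg hd r l))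

lemma smRlow (i j k l : Fin n) : SmOn W (RlowJ g i j k l) :=
  SmOn.sum fun r _ => (hg r l).mul (smRup hW hg hd i j k r)

lemma smDGamF (i k l : Fin n) : SmOn W (DGamF g i k l) :=
  (SmOn.sum fun a _ => SmOn.sum fun b _ =>
      ((smGam hW hg hd i k a).mul (smTrR hW hg hd a b)).mul (smInv hg hd b l)).sub
    (SmOn.sum fun s _ => (smInv hg hd s l).mul ((smTrR hW hg hd k s).pdP hW i))

end smooth
end joint

section rulesP
variable {F G : Qs n → ℂ} {q : Qs n}

lemma pdP_congr (i : Fin n) (h : F =ᶠ[nhds q] G) : pdP i F q = pdP i G q := by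
  unfold pdP; rw [h.fderiv_eq]

lemma pdbarP_congr (i : Fin n) (h : F =ᶠ[nhds q] G) : pdbarP i F q = pdbarP i G q := by
  unfold pdbarP; rw [h.fderiv_eq]

lemma dtP_congr (h : F =ᶠ[nhds q] G) : dtP F q = dtP G q := by
  unfold dtP; rw [h.fderiv_eq]

lemma pdP_const (i : Fin n) (c : ℂ) : pdP i (fun _ => c) q = 0 := by
  unfold pdP; rw [dv_const, dv_const]; ring

lemma pdbarP_const (i : Fin n) (c : ℂ) : pdbarP i (fun _ => c) q = 0 := by
  unfold pdbarP; rw [dv_const, dv_const]; ring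

lemma dtP_const (c : ℂ) : dtP (fun _ => c) q = 0 := by
  unfold dtP; rw [dv_const]

lemma pdP_sum {ι : Type*} (s : Finset ι) (F : ι → Qs n → ℂ)
    (hf : ∀ a ∈ s, DifferentiableAt ℝ (F a) q) (i : Fin n) :
    pdP i (fun q => ∑ a ∈ s, F a q) q = ∑ a ∈ s, pdP i (F a) q := by
  unfold pdP; rw [dv_sum s F hf, dv_sum s F hf, Finset.mul_sum, ← Finset.sum_sub_distrib,
    ← Finset.sum_div]

lemma pdbarP_sum {ι : Type*} (s : Finset ι) (F : ι → Qs n → ℂ)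
    (hf : ∀ a ∈ s, DifferentiableAt ℝ (F a) q) (i : Fin n) :
    pdbarP i (fun q => ∑ a ∈ s, F a q) q = ∑ a ∈ s, pdbarP i (F a) q := by
  unfold pdbarP; rw [dv_sum s F hf, dv_sum s F hf, Finset.mul_sum, ← Finset.sum_add_distrib,
    ← Finset.sum_div]

lemma dtP_sum {ι : Type*} (s : Finset ι) (F : ι → Qs n → ℂ)
    (hf : ∀ a ∈ s, DifferentiableAt ℝ (F a) q) :
    dtP (fun q => ∑ a ∈ s, F a q) q = ∑ a ∈ s, dtP (F a) q := by
  unfold dtP; rw [dv_sum s F hf]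

lemma pdP_mul (i : Fin n) (hf : DifferentiableAt ℝ F q) (hg : DifferentiableAt ℝ G q) :
    pdP i (fun q => F q * G q) q = pdP i F q * G q + F q * pdP i G q := by
  unfold pdP; rw [dv_mul hf hg, dv_mul hf hg]; ring

lemma pdbarP_mul (i : Fin n) (hf : DifferentiableAt ℝ F q) (hg : DifferentiableAt ℝ G q) :
    pdbarP i (fun q => F q * G q) q = pdbarP i F q * G q + F q * pdbarP i G q := by
  unfold pdbarP; rw [dv_mul hf hg, dv_mul hf hg]; ring

lemma dtP_mul (hf : DifferentiableAt ℝ F q) (hg : DifferentiableAt ℝ G q) :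
    dtP (fun q => F q * G q) q = dtP F q * G q + F q * dtP G q := by
  unfold dtP; rw [dv_mul hf hg]

lemma dtP_neg (hf : DifferentiableAt ℝ F q) :
    dtP (fun q => - F q) q = - dtP F q := by
  unfold dtP; rw [dv_neg hf]

lemma pdP_neg (i : Fin n) (hf : DifferentiableAt ℝ F q) :
    pdP i (fun q => - F q) q = - pdP i F q := by
  unfold pdP; rw [dv_neg hf, dv_neg hf]; ring

lemma pdbarP_neg (i : Fin n) (hf : DifferentiableAt ℝ F q) :
    pdbarP i (fun q => - F q) q = - pdbarP i F q := by
  unfold pdbarP; rw [dv_neg hf, dv_neg hf]; ring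

lemma pdP_sub (i : Fin n) (hf : DifferentiableAt ℝ F q) (hg : DifferentiableAt ℝ G q) :
    pdP i (fun q => F q - G q) q = pdP i F q - pdP i G q := by
  unfold pdP; rw [dv_sub hf hg, dv_sub hf hg]; ring

lemma pdbarP_sub (i : Fin n) (hf : DifferentiableAt ℝ F q) (hg : DifferentiableAt ℝ G q) :
    pdbarP i (fun q => F q - G q) q = pdbarP i F q - pdbarP i G q := by
  unfold pdbarP; rw [dv_sub hf hg, dv_sub hf hg]; ring

lemma dtP_sub (hf : DifferentiableAt ℝ F q) (hg : DifferentiableAt ℝ G q) :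
    dtP (fun q => F q - G q) q = dtP F q - dtP G q := by
  unfold dtP; rw [dv_sub hf hg]

lemma pdbarP_conj (i : Fin n) (hf : DifferentiableAt ℝ F q) :
    pdbarP i (fun q => (starRingEnd ℂ) (F q)) q = (starRingEnd ℂ) (pdP i F q) := by
  unfold pdbarP pdP
  rw [dv_conj hf, dv_conj hf]
  rw [map_div₀, map_sub, _root_.map_mul, Complex.conj_I,
    show (starRingEnd ℂ) 2 = 2 from Complex.conj_ofNat 2]
  ring

lemma pdP_log (i : Fin n) (hx : F q ∈ Complex.slitPlane) (hf : DifferentiableAt ℝ F q) :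
    pdP i (fun q => Complex.log (F q)) q = (F q)⁻¹ * pdP i F q := by
  unfold pdP; rw [dv_log hx hf, dv_log hx hf]; ring

lemma pdP_prod {ι : Type*} [DecidableEq ι] (s : Finset ι) (F : ι → Qs n → ℂ)
    (hf : ∀ a ∈ s, DifferentiableAt ℝ (F a) q) (i : Fin n) :
    pdP i (fun q => ∏ a ∈ s, F a q) q
      = ∑ a ∈ s, pdP i (F a) q * ∏ b ∈ s.erase a, F b q := by
  unfold pdP
  rw [dv_prod s F hf, dv_prod s F hf, Finset.mul_sum, ← Finset.sum_sub_distrib, Finset.sum_div]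
  exact Finset.sum_congr rfl fun a _ => by ring

end rulesP

section ident
variable {g : ℝ → (Fin n → ℂ) → Matrix (Fin n) (Fin n) ℂ} {W : Set (Qs n)} {q : Qs n}

lemma smLgd (hW : IsOpen W) (hg : ∀ k s : Fin n, SmOn W (Gks g k s))
    (hslit : ∀ q ∈ W, detJ g q ∈ Complex.slitPlane) : SmOn W (lgdJ g) := by
  refine (hW.contDiffOn_iff).2 fun q hq => ?_
  exact ((Complex.contDiffAt_log (hslit q hq)).restrict_scalars ℝ).comp q
    ((smDet hg).contDiffAt hW hq)

lemma isUnitDet (hd : ∀ q ∈ W, detJ g q ≠ 0) (hq : q ∈ W) : IsUnit (g q.1 q.2).det :=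
  isUnit_iff_ne_zero.2 (hd q hq)

lemma mulInv (hd : ∀ q ∈ W, detJ g q ≠ 0) (hq : q ∈ W) (a b : Fin n) :
    ∑ s, Gks g a s q * InvJ g s b q = if a = b then 1 else 0 := by
  have h2 := congrArg (fun M : Matrix (Fin n) (Fin n) ℂ => M a b)
    (Matrix.mul_nonsing_inv (g q.1 q.2) (isUnitDet hd hq))
  simpa [Matrix.mul_apply, Matrix.one_apply, Gks, InvJ] using h2

lemma invMul (hd : ∀ q ∈ W, detJ g q ≠ 0) (hq : q ∈ W) (a b : Fin n) :
    ∑ s, InvJ g a s q * Gks g s b q = if a = b then 1 else 0 := by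
  have h2 := congrArg (fun M : Matrix (Fin n) (Fin n) ℂ => M a b)
    (Matrix.nonsing_inv_mul (g q.1 q.2) (isUnitDet hd hq))
  simpa [Matrix.mul_apply, Matrix.one_apply, Gks, InvJ] using h2

lemma conjGks (hh : ∀ q ∈ W, (g q.1 q.2).IsHermitian) (hq : q ∈ W) (a b : Fin n) :
    (starRingEnd ℂ) (Gks g a b q) = Gks g b a q := by
  have := congrArg (fun M : Matrix (Fin n) (Fin n) ℂ => M b a) (hh q hq)
  simpa [Matrix.conjTranspose_apply, Gks] using this

lemma conjInv (hh : ∀ q ∈ W, (g q.1 q.2).IsHermitian) (hq : q ∈ W) (a b : Fin n) :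
    (starRingEnd ℂ) (InvJ g a b q) = InvJ g b a q := by
  have h : ((g q.1 q.2)⁻¹)ᴴ = (g q.1 q.2)⁻¹ := by
    rw [Matrix.conjTranspose_nonsing_inv, (hh q hq).eq]
  have := congrArg (fun M : Matrix (Fin n) (Fin n) ℂ => M b a) h
  simpa [Matrix.conjTranspose_apply, InvJ] using this

/-- cofactor expansion fiber lemma -/
lemma adj_fiber (A : Matrix (Fin n) (Fin n) ℂ) (p r : Fin n) :
    A.adjugate p r = ∑ σ ∈ Finset.univ.filter (fun σ : Equiv.Perm (Fin n) => σ p = r),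
      ((Equiv.Perm.sign σ : ℤ) : ℂ) * ∏ b ∈ Finset.univ.erase p, A (σ b) b := by
  classical
  rw [Matrix.adjugate_apply, Matrix.det_apply]
  rw [← Finset.sum_filter_add_sum_filter_not Finset.univ (fun σ : Equiv.Perm (Fin n) => σ p = r)]
  have h2 : ∑ σ ∈ Finset.univ.filter (fun σ : Equiv.Perm (Fin n) => ¬ σ p = r),
      Equiv.Perm.sign σ • ∏ b, (A.updateRow r (Pi.single p 1)) (σ b) b = 0 := by
    refine Finset.sum_eq_zero fun σ hσ => ?_
    have hσ' : σ p ≠ r := by simpa using (Finset.mem_filter.1 hσ).2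
    have hb0 : σ (σ⁻¹ r) = r := by simp
    have hb0p : σ⁻¹ r ≠ p := fun h => hσ' (by rw [← h, hb0])
    have : (A.updateRow r (Pi.single p 1)) (σ (σ⁻¹ r)) (σ⁻¹ r) = 0 := by
      rw [hb0, Matrix.updateRow_self, Pi.single_eq_of_ne hb0p]
    have hz : (∏ b, (A.updateRow r (Pi.single p 1)) (σ b) b) = 0 :=
      Finset.prod_eq_zero (Finset.mem_univ (σ⁻¹ r)) this
    rw [hz, smul_zero]
  rw [h2, add_zero]
  refine Finset.sum_congr rfl fun σ hσ => ?_
  have hσ' : σ p = r := by simpa using (Finset.mem_filter.1 hσ).2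
  rw [Units.smul_def, zsmul_eq_mul,
    ← Finset.mul_prod_erase Finset.univ _ (Finset.mem_univ p)]
  beta_reduce
  rw [hσ', Matrix.updateRow_self, Pi.single_eq_same, one_mul]
  congr 1
  refine Finset.prod_congr rfl fun b hb => ?_
  have hbp : b ≠ p := (Finset.mem_erase.1 hb).1
  have : σ b ≠ r := fun h => hbp (by
    have := σ.injective (h.trans hσ'.symm); exact this)
  rw [Matrix.updateRow_ne this]

lemma jacobi_alg (A : Matrix (Fin n) (Fin n) ℂ) (B : Fin n → Fin n → ℂ) :
    ∑ σ : Equiv.Perm (Fin n), ((Equiv.Perm.sign σ : ℤ) : ℂ) *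
        ∑ p, B (σ p) p * ∏ b ∈ Finset.univ.erase p, A (σ b) b
      = ∑ p, ∑ r, A.adjugate p r * B r p := by
  classical
  have h1 : ∀ σ : Equiv.Perm (Fin n), ((Equiv.Perm.sign σ : ℤ) : ℂ) *
      ∑ p, B (σ p) p * ∏ b ∈ Finset.univ.erase p, A (σ b) b
      = ∑ p, ((Equiv.Perm.sign σ : ℤ) : ℂ) * (B (σ p) p * ∏ b ∈ Finset.univ.erase p, A (σ b) b) :=
    fun σ => Finset.mul_sum _ _ _
  simp_rw [h1]
  rw [Finset.sum_comm]
  refine Finset.sum_congr rfl fun p _ => ?_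
  rw [← Finset.sum_fiberwise_of_maps_to (g := fun σ : Equiv.Perm (Fin n) => σ p)
    (fun σ _ => Finset.mem_univ (σ p))]
  refine Finset.sum_congr rfl fun r _ => ?_
  rw [adj_fiber, Finset.sum_mul]
  refine Finset.sum_congr rfl fun σ hσ => ?_
  have hσ' : σ p = r := by simpa using (Finset.mem_filter.1 hσ).2
  rw [hσ']
  ring

end ident

section flowid
variable {g : ℝ → (Fin n → ℂ) → Matrix (Fin n) (Fin n) ℂ} {W : Set (Qs n)} {q : Qs n}

lemma pdP_detJ (hW : IsOpen W) (hg : ∀ k s : Fin n, SmOn W (Gks g k s))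
    (hq : q ∈ W) (k : Fin n) :
    pdP k (detJ g) q = ∑ p, ∑ r, adjJ g p r q * pdP k (Gks g r p) q := by
  have hrw : detJ g = fun q =>
      ∑ σ : Equiv.Perm (Fin n), ((Equiv.Perm.sign σ : ℤ) : ℂ) * ∏ p, Gks g (σ p) p q :=
    detJ_eq
  rw [hrw]
  rw [pdP_sum Finset.univ _ (fun σ _ => by
    exact (DifferentiableAt.const_mul (by
      have : SmOn W (fun q => ∏ p, Gks g (σ p) p q) := SmOn.prod fun p _ => hg (σ p) p
      exact this.diffAt hW hq) _))]
  have step : ∀ σ : Equiv.Perm (Fin n),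
      pdP k (fun q => ((Equiv.Perm.sign σ : ℤ) : ℂ) * ∏ p, Gks g (σ p) p q) q
      = ((Equiv.Perm.sign σ : ℤ) : ℂ) *
          ∑ p, pdP k (Gks g (σ p) p) q * ∏ b ∈ Finset.univ.erase p, Gks g (σ b) b q := by
    intro σ
    have hprod : DifferentiableAt ℝ (fun q => ∏ p, Gks g (σ p) p q) q :=
      (SmOn.prod fun p _ => hg (σ p) p).diffAt hW hq
    rw [pdP_mul k (differentiableAt_const _) hprod, pdP_const, zero_mul, zero_add]
    rw [pdP_prod Finset.univ _ (fun p _ => (hg (σ p) p).diffAt hW hq)]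
  simp_rw [step]
  exact jacobi_alg (g q.1 q.2) (fun r p => pdP k (Gks g r p) q)

lemma jacJ (hW : IsOpen W) (hg : ∀ k s : Fin n, SmOn W (Gks g k s))
    (hslit : ∀ q ∈ W, detJ g q ∈ Complex.slitPlane) (hq : q ∈ W) (k : Fin n) :
    ∑ p, GamJ g k p p q = pdP k (lgdJ g) q := by
  have hlog : pdP k (lgdJ g) q = (detJ g q)⁻¹ * pdP k (detJ g) q := by
    have h0 : lgdJ g = fun q => Complex.log (detJ g q) := rfl
    rw [h0, pdP_log k (hslit q hq) ((smDet hg).diffAt hW hq)]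
  rw [hlog, pdP_detJ hW hg hq k, Finset.mul_sum]
  have hout : ∀ p, (detJ g q)⁻¹ * ∑ r, adjJ g p r q * pdP k (Gks g r p) q
      = ∑ r, InvJ g p r q * pdP k (Gks g r p) q := by
    intro p
    rw [Finset.mul_sum]
    refine Finset.sum_congr rfl fun r _ => ?_
    rw [show InvJ g p r q = (detJ g q)⁻¹ * adjJ g p r q from by rw [InvJ_eq (g := g) p r]]
    ring
  simp_rw [hout]
  rw [Finset.sum_comm]
  simp only [GamJ]

lemma trRJ_eq_RC (hW : IsOpen W) (hg : ∀ k s : Fin n, SmOn W (Gks g k s))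
    (hd : ∀ q ∈ W, detJ g q ≠ 0) (hslit : ∀ q ∈ W, detJ g q ∈ Complex.slitPlane)
    (hq : q ∈ W) (k l : Fin n) :
    trRJ g k l q = - pdP k (pdbarP l (lgdJ g)) q := by
  have h0 : trRJ g k l q = - pdbarP l (fun q => ∑ p, GamJ g k p p q) q := by
    rw [pdbarP_sum Finset.univ _ (fun p _ => (smGam hW hg hd k p p).diffAt hW hq) l]
    simp only [trRJ, RupJ]
    rw [← Finset.sum_neg_distrib]
  rw [h0]
  have h1 : pdbarP l (fun q => ∑ p, GamJ g k p p q) q = pdbarP l (pdP k (lgdJ g)) q := by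
    refine pdbarP_congr l (Filter.eventuallyEq_of_mem (hW.mem_nhds hq) fun q' hq' => ?_)
    exact jacJ hW hg hslit hq' k
  rw [h1, pdbarP_pdP_comm l k ((smLgd hW hg hslit).contDiffAt hW hq)]

end flowid

section flowid2
variable {g : ℝ → (Fin n → ℂ) → Matrix (Fin n) (Fin n) ℂ} {W : Set (Qs n)} {q : Qs n}

lemma dtInvJ (hW : IsOpen W) (hg : ∀ k s : Fin n, SmOn W (Gks g k s))
    (hd : ∀ q ∈ W, detJ g q ≠ 0) (hq : q ∈ W) (c b : Fin n) :
    dtP (InvJ g c b) q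
      = - ∑ a, ∑ s, InvJ g c a q * dtP (Gks g a s) q * InvJ g s b q := by
  have dInv : ∀ a b', DifferentiableAt ℝ (InvJ g a b') q :=
    fun a b' => (smInv hg hd a b').diffAt hW hq
  have dG : ∀ a s, DifferentiableAt ℝ (Gks g a s) q := fun a s => (hg a s).diffAt hW hq
  have key : ∀ a, ∑ s, (dtP (Gks g a s) q * InvJ g s b q
      + Gks g a s q * dtP (InvJ g s b) q) = 0 := by
    intro a
    have h0 : dtP (fun q => ∑ s, Gks g a s q * InvJ g s b q) q = 0 := by
      rw [dtP_congr (Filter.eventuallyEq_of_mem (hW.mem_nhds hq)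
        fun q' hq' => mulInv hd hq' a b)]
      exact dtP_const _
    rw [dtP_sum Finset.univ _ (fun s _ => (dG a s).fun_mul (dInv s b))] at h0
    rw [← h0]
    exact Finset.sum_congr rfl fun s _ => (dtP_mul (dG a s) (dInv s b)).symm
  have h2 : ∑ a, InvJ g c a q * ∑ s, (dtP (Gks g a s) q * InvJ g s b q
      + Gks g a s q * dtP (InvJ g s b) q) = 0 := by
    simp_rw [key]; simp
  have h3 : (∑ a, InvJ g c a q * ∑ s, (dtP (Gks g a s) q * InvJ g s b q
        + Gks g a s q * dtP (InvJ g s b) q))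
      = (∑ a, ∑ s, InvJ g c a q * dtP (Gks g a s) q * InvJ g s b q)
        + dtP (InvJ g c b) q := by
    have e1 : ∀ a, InvJ g c a q * ∑ s, (dtP (Gks g a s) q * InvJ g s b q
        + Gks g a s q * dtP (InvJ g s b) q)
        = (∑ s, InvJ g c a q * dtP (Gks g a s) q * InvJ g s b q)
          + ∑ s, InvJ g c a q * Gks g a s q * dtP (InvJ g s b) q := by
      intro a
      rw [Finset.mul_sum, ← Finset.sum_add_distrib]
      exact Finset.sum_congr rfl fun s _ => by ring
    simp_rw [e1]
    rw [Finset.sum_add_distrib]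
    congr 1
    rw [Finset.sum_comm]
    have e2 : ∀ s, ∑ a, InvJ g c a q * Gks g a s q * dtP (InvJ g s b) q
        = (if c = s then 1 else 0) * dtP (InvJ g s b) q := by
      intro s
      rw [← Finset.sum_mul, invMul hd hq c s]
    simp_rw [e2]
    simp [ite_mul]
  rw [h3] at h2
  exact eq_neg_of_add_eq_zero_right h2

end flowid2

section flowid3
variable {g : ℝ → (Fin n → ℂ) → Matrix (Fin n) (Fin n) ℂ} {W : Set (Qs n)} {q : Qs n}

lemma dtGamJ (hW : IsOpen W) (hg : ∀ k s : Fin n, SmOn W (Gks g k s))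
    (hd : ∀ q ∈ W, detJ g q ≠ 0)
    (hfl : ∀ q ∈ W, ∀ a b, dtP (Gks g a b) q = - trRJ g a b q)
    (hq : q ∈ W) (i k l : Fin n) :
    dtP (GamJ g i k l) q = DGamF g i k l q := by
  have dInv : ∀ a b', DifferentiableAt ℝ (InvJ g a b') q :=
    fun a b' => (smInv hg hd a b').diffAt hW hq
  have dPdP : ∀ a s, DifferentiableAt ℝ (pdP i (Gks g a s)) q :=
    fun a s => ((hg a s).pdP hW i).diffAt hW hq
  have h0 : dtP (GamJ g i k l) q
      = ∑ s, (dtP (InvJ g s l) q * pdP i (Gks g k s) q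
          + InvJ g s l q * dtP (pdP i (Gks g k s)) q) := by
    have e : GamJ g i k l = fun q => ∑ s, InvJ g s l q * pdP i (Gks g k s) q := rfl
    rw [e, dtP_sum Finset.univ _ (fun s _ => (dInv s l).fun_mul (dPdP k s))]
    exact Finset.sum_congr rfl fun s _ => dtP_mul (dInv s l) (dPdP k s)
  have hswap : ∀ s, dtP (pdP i (Gks g k s)) q = - pdP i (trRJ g k s) q := by
    intro s
    rw [dtP_pdP_comm i ((hg k s).contDiffAt hW hq)]
    have e : pdP i (dtP (Gks g k s)) q = pdP i (fun q => - trRJ g k s q) q :=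
      pdP_congr i (Filter.eventuallyEq_of_mem (hW.mem_nhds hq) fun q' hq' => hfl q' hq' k s)
    rw [e, pdP_neg i ((smTrR hW hg hd k s).diffAt hW hq)]
  have hdtinv : ∀ s, dtP (InvJ g s l) q
      = ∑ a, ∑ b, InvJ g s a q * trRJ g a b q * InvJ g b l q := by
    intro s
    rw [dtInvJ hW hg hd hq s l]
    have e : ∀ a b', InvJ g s a q * dtP (Gks g a b') q * InvJ g b' l q
        = - (InvJ g s a q * trRJ g a b' q * InvJ g b' l q) := by
      intro a b'; rw [hfl q hq a b']; ring
    simp_rw [e]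
    simp
  rw [h0]
  simp_rw [hswap, hdtinv]
  have e2 : DGamF g i k l q
      = (∑ a, ∑ b, (∑ s, InvJ g s a q * pdP i (Gks g k s) q) * trRJ g a b q * InvJ g b l q)
        - ∑ s, InvJ g s l q * pdP i (trRJ g k s) q := rfl
  rw [e2]
  have e3 : ∀ s, ((∑ a, ∑ b, InvJ g s a q * trRJ g a b q * InvJ g b l q) * pdP i (Gks g k s) q
        + InvJ g s l q * - pdP i (trRJ g k s) q)
      = (∑ a, ∑ b, InvJ g s a q * pdP i (Gks g k s) q * trRJ g a b q * InvJ g b l q)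
        - InvJ g s l q * pdP i (trRJ g k s) q := by
    intro s
    rw [Finset.sum_mul]
    simp_rw [Finset.sum_mul]
    have : ∀ a b, InvJ g s a q * trRJ g a b q * InvJ g b l q * pdP i (Gks g k s) q
        = InvJ g s a q * pdP i (Gks g k s) q * trRJ g a b q * InvJ g b l q := by
      intro a b; ring
    simp_rw [this]
    ring
  simp_rw [e3]
  rw [Finset.sum_sub_distrib]
  congr 1
  rw [Finset.sum_comm]
  refine Finset.sum_congr rfl fun a _ => ?_
  rw [Finset.sum_comm]
  refine Finset.sum_congr rfl fun b _ => ?_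
  rw [Finset.sum_mul, Finset.sum_mul]

end flowid3

section flowid4
variable {g : ℝ → (Fin n → ℂ) → Matrix (Fin n) (Fin n) ℂ} {W : Set (Qs n)} {q : Qs n}

lemma covIJ_eq (hd : ∀ q ∈ W, detJ g q ≠ 0) (hq : q ∈ W) (i k l : Fin n) :
    covIJ g i k l q = - ∑ r, Gks g r l q * DGamF g i k r q := by
  have hB : ∑ r, Gks g r l q * ∑ s, InvJ g s r q * pdP i (trRJ g k s) q
      = pdP i (trRJ g k l) q := by
    simp_rw [Finset.mul_sum]
    rw [Finset.sum_comm]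
    have e : ∀ s, ∑ r, Gks g r l q * (InvJ g s r q * pdP i (trRJ g k s) q)
        = (∑ r, InvJ g s r q * Gks g r l q) * pdP i (trRJ g k s) q := by
      intro s; rw [Finset.sum_mul]; exact Finset.sum_congr rfl fun r _ => by ring
    simp_rw [e, invMul hd hq]
    simp [ite_mul]
  have hA : ∑ r, Gks g r l q * ∑ a, ∑ b, GamJ g i k a q * trRJ g a b q * InvJ g b r q
      = ∑ a, GamJ g i k a q * trRJ g a l q := by
    simp_rw [Finset.mul_sum]
    rw [Finset.sum_comm]
    refine Finset.sum_congr rfl fun a _ => ?_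
    rw [Finset.sum_comm]
    have e : ∀ b, ∑ r, Gks g r l q * (GamJ g i k a q * trRJ g a b q * InvJ g b r q)
        = GamJ g i k a q * trRJ g a b q * ∑ r, InvJ g b r q * Gks g r l q := by
      intro b; rw [Finset.mul_sum]; exact Finset.sum_congr rfl fun r _ => by ring
    simp_rw [e, invMul hd hq]
    simp [mul_ite]
  have e0 : covIJ g i k l q
      = pdP i (trRJ g k l) q - ∑ a, GamJ g i k a q * trRJ g a l q := rfl
  rw [e0, ← hB, ← hA]
  simp only [DGamF]
  simp_rw [mul_sub]
  rw [Finset.sum_sub_distrib]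
  ring

lemma conjGamJ (hW : IsOpen W) (hg : ∀ k s : Fin n, SmOn W (Gks g k s))
    (hh : ∀ q ∈ W, (g q.1 q.2).IsHermitian) (hq : q ∈ W) (j l r : Fin n) :
    (starRingEnd ℂ) (GamJ g j l r q) = ∑ s, InvJ g r s q * pdbarP j (Gks g s l) q := by
  have e : GamJ g j l r q = ∑ s, InvJ g s r q * pdP j (Gks g l s) q := rfl
  rw [e, map_sum]
  refine Finset.sum_congr rfl fun s _ => ?_
  rw [_root_.map_mul, conjInv hh hq s r]
  congr 1
  rw [← pdbarP_conj j ((hg l s).diffAt hW hq)]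
  refine pdbarP_congr j (Filter.eventuallyEq_of_mem (hW.mem_nhds hq) fun q' hq' => ?_)
  exact conjGks hh hq' l s

lemma main_joint (hW : IsOpen W) (hg : ∀ k s : Fin n, SmOn W (Gks g k s))
    (hd : ∀ q ∈ W, detJ g q ≠ 0) (hslit : ∀ q ∈ W, detJ g q ∈ Complex.slitPlane)
    (hh : ∀ q ∈ W, (g q.1 q.2).IsHermitian)
    (hfl : ∀ q ∈ W, ∀ a b, dtP (Gks g a b) q = - trRJ g a b q)
    (hq : q ∈ W) (i j k l : Fin n) :
    dtP (RlowJ g i j k l) q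
      = - (∑ r, trRJ g r l q * RupJ g i j k r q)
        + (pdbarP j (covIJ g i k l) q
            - ∑ r, (starRingEnd ℂ) (GamJ g j l r q) * covIJ g i k r q) := by
  have dG : ∀ a s, DifferentiableAt ℝ (Gks g a s) q := fun a s => (hg a s).diffAt hW hq
  have dRup : ∀ r, DifferentiableAt ℝ (RupJ g i j k r) q :=
    fun r => (smRup hW hg hd i j k r).diffAt hW hq
  have dDG : ∀ r, DifferentiableAt ℝ (DGamF g i k r) q :=
    fun r => (smDGamF hW hg hd i k r).diffAt hW hq
  have dpdbarG : ∀ r, DifferentiableAt ℝ (pdbarP j (GamJ g i k r)) q :=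
    fun r => ((smGam hW hg hd i k r).pdbarP hW j).diffAt hW hq
  have step1 : dtP (RlowJ g i j k l) q
      = ∑ r, (dtP (Gks g r l) q * RupJ g i j k r q + Gks g r l q * dtP (RupJ g i j k r) q) := by
    have e : RlowJ g i j k l = fun q => ∑ r, Gks g r l q * RupJ g i j k r q := rfl
    rw [e, dtP_sum Finset.univ _ (fun r _ => (dG r l).fun_mul (dRup r))]
    exact Finset.sum_congr rfl fun r _ => dtP_mul (dG r l) (dRup r)
  have step3 : ∀ r, dtP (RupJ g i j k r) q = - pdbarP j (DGamF g i k r) q := by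
    intro r
    have e : RupJ g i j k r = fun q => - pdbarP j (GamJ g i k r) q := rfl
    rw [e, dtP_neg (dpdbarG r), dtP_pdbarP_comm j ((smGam hW hg hd i k r).contDiffAt hW hq)]
    congr 1
    refine pdbarP_congr j (Filter.eventuallyEq_of_mem (hW.mem_nhds hq) fun q' hq' => ?_)
    exact dtGamJ hW hg hd hfl hq' i k r
  have step4 : pdbarP j (covIJ g i k l) q
      = - ∑ r, (pdbarP j (Gks g r l) q * DGamF g i k r q
          + Gks g r l q * pdbarP j (DGamF g i k r) q) := by
    have e : pdbarP j (covIJ g i k l) q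
        = pdbarP j (fun q => - ∑ r, Gks g r l q * DGamF g i k r q) q := by
      refine pdbarP_congr j (Filter.eventuallyEq_of_mem (hW.mem_nhds hq) fun q' hq' => ?_)
      exact covIJ_eq hd hq' i k l
    rw [e]
    rw [pdbarP_neg j (by
      exact DifferentiableAt.fun_sum fun r _ => (dG r l).fun_mul (dDG r))]
    congr 1
    rw [pdbarP_sum Finset.univ _ (fun r _ => (dG r l).fun_mul (dDG r)) j]
    exact Finset.sum_congr rfl fun r _ => pdbarP_mul j (dG r l) (dDG r)
  have step5 : ∑ r, (starRingEnd ℂ) (GamJ g j l r q) * covIJ g i k r q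
      = - ∑ s, pdbarP j (Gks g s l) q * DGamF g i k s q := by
    have e : ∀ r, (starRingEnd ℂ) (GamJ g j l r q) * covIJ g i k r q
        = - ∑ s, ∑ a, InvJ g r s q * pdbarP j (Gks g s l) q * (Gks g a r q * DGamF g i k a q) := by
      intro r
      rw [conjGamJ hW hg hh hq j l r, covIJ_eq hd hq i k r, mul_neg, Finset.sum_mul_sum]
    simp_rw [e]
    rw [Finset.sum_neg_distrib]
    congr 1
    rw [Finset.sum_comm]
    refine Finset.sum_congr rfl fun s _ => ?_
    rw [Finset.sum_comm]
    have e2 : ∀ a, ∑ r, InvJ g r s q * pdbarP j (Gks g s l) q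
        * (Gks g a r q * DGamF g i k a q)
        = (∑ r, Gks g a r q * InvJ g r s q) * (pdbarP j (Gks g s l) q * DGamF g i k a q) := by
      intro a
      rw [Finset.sum_mul]
      exact Finset.sum_congr rfl fun r _ => by ring
    simp_rw [e2, mulInv hd hq]
    simp [ite_mul]
  rw [step1]
  simp_rw [hfl q hq, step3]
  rw [step4, step5]
  have efin : ∀ r, (- trRJ g r l q * RupJ g i j k r q
      + Gks g r l q * - pdbarP j (DGamF g i k r) q)
      = - (trRJ g r l q * RupJ g i j k r q)
        + - (Gks g r l q * pdbarP j (DGamF g i k r) q) := fun r => by ring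
  simp_rw [efin]
  rw [Finset.sum_add_distrib, Finset.sum_neg_distrib, Finset.sum_neg_distrib,
    Finset.sum_add_distrib]
  ring

end flowid4
-- MORE
end CRF

set_option maxHeartbeats 2000000 in
open CRF in
open scoped ContDiff in
/-- Under the Chern-Ricci flow,
`∂_t R_{ij̄kl̄} = −R_{ql̄p}^p R_{ij̄k}^q + ∇_{j̄}∇_i R_{kl̄p}^p`. -/
theorem stmt_13 {n : ℕ} (U : Set (Fin n → ℂ)) (hU : IsOpen U) (T : ℝ) (hT : 0 < T)
    (g : ℝ → (Fin n → ℂ) → Matrix (Fin n) (Fin n) ℂ)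
    (hsm : ∀ k s : Fin n, ContDiffOn ℝ (⊤ : ℕ∞)
      (fun q : ℝ × (Fin n → ℂ) => g q.1 q.2 k s) (Set.Icc 0 T ×ˢ U))
    (hpos : ∀ t ∈ Set.Icc (0:ℝ) T, ∀ z ∈ U, (g t z).PosDef)
    (hflow : ∀ t ∈ Set.Icc (0:ℝ) T, ∀ z ∈ U, ∀ i j : Fin n,
      deriv (fun τ => g τ z i j) t = - RC (g t) i j z)
    (t : ℝ) (ht : t ∈ Set.Ioo (0:ℝ) T) (z : Fin n → ℂ) (hz : z ∈ U) (i j k l : Fin n) :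
    deriv (fun τ => RlowG (g τ) i j k l z) t
      = - (∑ q, trR (g t) q l z * Rup (g t) i j k q z)
        + (pdbar j (covI (g t) i k l) z
            - ∑ r, (starRingEnd ℂ) (Gam (g t) j l r z) * covI (g t) i k r z) := by
  classical
  set W : Set (Qs n) := Set.Ioo (0:ℝ) T ×ˢ U with hWdef
  have hW : IsOpen W := isOpen_Ioo.prod hU
  have hsub : ∀ q ∈ W, q.1 ∈ Set.Icc (0:ℝ) T ∧ q.2 ∈ U := by
    intro q hq
    exact ⟨Set.Ioo_subset_Icc_self hq.1, hq.2⟩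
  have hg : ∀ k s : Fin n, SmOn W (Gks g k s) := by
    intro k s
    exact ((hsm k s).of_le (by simp)).mono
      (Set.prod_mono Set.Ioo_subset_Icc_self subset_rfl)
  have hpos' : ∀ q ∈ W, (g q.1 q.2).PosDef := fun q hq =>
    hpos q.1 (hsub q hq).1 q.2 (hsub q hq).2
  have hh : ∀ q ∈ W, (g q.1 q.2).IsHermitian := fun q hq => (hpos' q hq).isHermitian
  have hdp : ∀ q ∈ W, (0:ℂ) < detJ g q := fun q hq => (hpos' q hq).det_pos
  have hd : ∀ q ∈ W, detJ g q ≠ 0 := fun q hq => (ne_of_gt (hdp q hq))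
  have hslit : ∀ q ∈ W, detJ g q ∈ Complex.slitPlane := by
    intro q hq
    rw [Complex.mem_slitPlane_iff]
    left
    have := (Complex.lt_def.1 (hdp q hq)).1
    simpa using this
  -- bridges
  have hGamB : ∀ (a b c : Fin n) (t' : ℝ) (z' : Fin n → ℂ), (t', z') ∈ W →
      Gam (g t') a b c z' = GamJ g a b c (t', z') := by
    intro a b c t' z' hq'
    refine Finset.sum_congr rfl fun s _ => ?_
    congr 1
    exact pd_slice a ((hg b s).diffAt hW hq')
  have hRupB : ∀ (a b c d : Fin n) (t' : ℝ) (z' : Fin n → ℂ), (t', z') ∈ W →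
      Rup (g t') a b c d z' = RupJ g a b c d (t', z') := by
    intro a b c d t' z' hq'
    have he : Gam (g t') a c d =ᶠ[nhds z'] fun w => GamJ g a c d (t', w) :=
      Filter.eventuallyEq_of_mem (hU.mem_nhds hq'.2)
        (fun w hw => hGamB a c d t' w ⟨hq'.1, hw⟩)
    show - pdbar b (Gam (g t') a c d) z' = - pdbarP b (GamJ g a c d) (t', z')
    rw [pdbar_congr b he, pdbar_slice b ((smGam hW hg hd a c d).diffAt hW hq')]
  have htrRB : ∀ (a b : Fin n) (t' : ℝ) (z' : Fin n → ℂ), (t', z') ∈ W →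
      trR (g t') a b z' = trRJ g a b (t', z') := by
    intro a b t' z' hq'
    exact Finset.sum_congr rfl fun p _ => hRupB a b p p t' z' hq'
  have hcovIB : ∀ (a b c : Fin n) (t' : ℝ) (z' : Fin n → ℂ), (t', z') ∈ W →
      covI (g t') a b c z' = covIJ g a b c (t', z') := by
    intro a b c t' z' hq'
    have h1 : pd a (trR (g t') b c) z' = pdP a (trRJ g b c) (t', z') := by
      have he : trR (g t') b c =ᶠ[nhds z'] fun w => trRJ g b c (t', w) :=
        Filter.eventuallyEq_of_mem (hU.mem_nhds hq'.2)
          (fun w hw => htrRB b c t' w ⟨hq'.1, hw⟩)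
      rw [pd_congr a he, pd_slice a ((smTrR hW hg hd b c).diffAt hW hq')]
    show pd a (trR (g t') b c) z' - ∑ r, Gam (g t') a b r z' * trR (g t') r c z' = _
    rw [h1]
    have h2 : ∀ r, Gam (g t') a b r z' * trR (g t') r c z'
        = GamJ g a b r (t', z') * trRJ g r c (t', z') := by
      intro r; rw [hGamB a b r t' z' hq', htrRB r c t' z' hq']
    simp_rw [h2]
    rfl
  have hfl : ∀ q' ∈ W, ∀ a b : Fin n, dtP (Gks g a b) q' = - trRJ g a b q' := by
    rintro ⟨t', z'⟩ hq' a b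
    have h1 : dtP (Gks g a b) (t', z') = deriv (fun τ => g τ z' a b) t' :=
      (deriv_slice ((hg a b).diffAt hW hq')).symm
    rw [h1, hflow t' (Set.Ioo_subset_Icc_self hq'.1) z' hq'.2 a b]
    have hRCB : RC (g t') a b z' = - pdP a (pdbarP b (lgdJ g)) (t', z') := by
      have he : (fun w => pdbar b (fun w' => Complex.log ((g t' w').det)) w)
          =ᶠ[nhds z'] fun w => pdbarP b (lgdJ g) (t', w) := by
        refine Filter.eventuallyEq_of_mem (hU.mem_nhds hq'.2) fun w hw => ?_
        exact pdbar_slice (F := lgdJ g) (t := t') (z := w) b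
          ((smLgd hW hg hslit).diffAt hW (show ((t', w) : Qs n) ∈ W from ⟨hq'.1, hw⟩))
      show - pd a _ z' = _
      rw [pd_congr a he,
        pd_slice a (((smLgd hW hg hslit).pdbarP hW b).diffAt hW hq')]
    rw [hRCB, trRJ_eq_RC hW hg hd hslit hq' a b]
  have hq : ((t, z) : Qs n) ∈ W := ⟨ht, hz⟩
  have hRlowB : ∀ τ ∈ Set.Ioo (0:ℝ) T,
      RlowG (g τ) i j k l z = RlowJ g i j k l (τ, z) := by
    intro τ hτ
    exact Finset.sum_congr rfl fun r _ => by rw [hRupB i j k r τ z ⟨hτ, hz⟩]; rfl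
  have hL : deriv (fun τ => RlowG (g τ) i j k l z) t = dtP (RlowJ g i j k l) (t, z) := by
    have he : (fun τ => RlowG (g τ) i j k l z) =ᶠ[nhds t] fun τ => RlowJ g i j k l (τ, z) :=
      Filter.eventuallyEq_of_mem (isOpen_Ioo.mem_nhds ht) (fun τ hτ => hRlowB τ hτ)
    rw [he.deriv_eq, deriv_slice ((smRlow hW hg hd i j k l).diffAt hW hq)]
  rw [hL, main_joint hW hg hd hslit hh hfl hq i j k l]
  -- convert RHS back
  have e1 : ∑ r, trRJ g r l (t, z) * RupJ g i j k r (t, z)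
      = ∑ q', trR (g t) q' l z * Rup (g t) i j k q' z := by
    refine Finset.sum_congr rfl fun r _ => ?_
    rw [htrRB r l t z hq, hRupB i j k r t z hq]
  have e2 : pdbarP j (covIJ g i k l) (t, z) = pdbar j (covI (g t) i k l) z := by
    have he : covI (g t) i k l =ᶠ[nhds z] fun w => covIJ g i k l (t, w) :=
      Filter.eventuallyEq_of_mem (hU.mem_nhds hz) (fun w hw => hcovIB i k l t w ⟨ht, hw⟩)
    rw [pdbar_congr j he, pdbar_slice j ((smCovI hW hg hd i k l).diffAt hW hq)]
  have e3 : ∑ r, (starRingEnd ℂ) (GamJ g j l r (t, z)) * covIJ g i k r (t, z)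
      = ∑ r, (starRingEnd ℂ) (Gam (g t) j l r z) * covI (g t) i k r z := by
    refine Finset.sum_congr rfl fun r _ => ?_
    rw [hGamB j l r t z hq, hcovIB i k r t z hq]
  rw [e1, e2, e3]
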